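/- Let (X,f) be a TDS and φ, ψ ∈ C(X,ℝ) with ψ > 0. Then P_ψ(φ) ≥ inf{ β ∈ ℝ : P(φ − βψ) ≤ 0 }, where P is the classical topological pressure. -/

import Mathlib

/-! If `P_ψ(φ) < β`, then `Q_{ψ,T}(φ, r) ≤ exp (β T)` for all large `T`. Sort an `(n, ε)`-separated
set by `k = ⌈S_n ψ / c⌉`, where `c = min ψ`: the `O(n)` classes lie in `X_n` for `T = k c`, and on
them `S_n (φ - β ψ) ≤ S_n φ - β T + |β| max ψ`. Each class injects into an `(n, r)`-spanning set of
`X_n` at the cost of a factor `exp (n δ)` (uniform continuity of `φ`), so the separated sums for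
`φ - β ψ` grow at most like `n exp (n δ)`. Hence `P(φ - β ψ) ≤ 0`, i.e. `β` lies in the set whose
infimum is taken. -/

open MeasureTheory Filter Topology Set

variable {X : Type*}

/-- Birkhoff sum `S_n φ (x) = ∑_{i<n} φ(f^i x)`. -/
noncomputable def birkhoff (f : X → X) (φ : X → ℝ) (n : ℕ) (x : X) : ℝ :=
  ∑ i ∈ Finset.range n, φ (f^[i] x)

/-- The `n`-th Bowen metric. -/
noncomputable def dynDist [MetricSpace X] (f : X → X) (n : ℕ) (x y : X) : ℝ :=
  ⨆ i : Fin n, dist (f^[(i : ℕ)] x) (f^[(i : ℕ)] y)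

/-- `F` is an `(n,ε)`-spanning set of `Z`. -/
def IsSpanningSet [MetricSpace X] (f : X → X) (n : ℕ) (ε : ℝ) (Z : Set X) (F : Finset X) : Prop :=
  ∀ y ∈ Z, ∃ x ∈ F, dynDist f n x y ≤ ε

/-- `E` is `(n,ε)`-separated. -/
def IsSeparatedSet [MetricSpace X] (f : X → X) (n : ℕ) (ε : ℝ) (E : Finset X) : Prop :=
  ∀ x ∈ E, ∀ y ∈ E, x ≠ y → ε < dynDist f n x y

/-- `S_T = {n : ∃ x, S_n ψ(x) ≤ T < S_{n+1} ψ(x)}`. -/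
def STset (f : X → X) (ψ : X → ℝ) (T : ℝ) : Set ℕ :=
  {n | ∃ x : X, birkhoff f ψ n x ≤ T ∧ T < birkhoff f ψ (n + 1) x}

/-- `X_n = {x : S_n ψ(x) ≤ T < S_{n+1} ψ(x)}`. -/
def Xset (f : X → X) (ψ : X → ℝ) (T : ℝ) (n : ℕ) : Set X :=
  {x | birkhoff f ψ n x ≤ T ∧ T < birkhoff f ψ (n + 1) x}

/-- `Q_{ψ,T}(f,φ,ε)`, the spanning-set quantity. -/
noncomputable def Qspan [MetricSpace X] (f : X → X) (φ ψ : X → ℝ) (T ε : ℝ) : ℝ :=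
  sInf { r : ℝ | ∃ F : ℕ → Finset X,
    (∀ n ∈ STset f ψ T, IsSpanningSet f n ε (Xset f ψ T n) (F n)) ∧
    r = ∑' n : ℕ, Set.indicator (STset f ψ T)
        (fun n => ∑ x ∈ F n, Real.exp (birkhoff f φ n x)) n }

/-- `P_{ψ,T}(f,φ,ε)`, the separated-set quantity. -/
noncomputable def Psep [MetricSpace X] (f : X → X) (φ ψ : X → ℝ) (T ε : ℝ) : ℝ :=
  sSup { r : ℝ | ∃ E : ℕ → Finset X,
    (∀ n ∈ STset f ψ T, (E n : Set X) ⊆ Xset f ψ T n ∧ IsSeparatedSet f n ε (E n)) ∧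
    r = ∑' n : ℕ, Set.indicator (STset f ψ T)
        (fun n => ∑ x ∈ E n, Real.exp (birkhoff f φ n x)) n }

/-- The `ψ`-induced topological pressure of `φ`. -/
noncomputable def inducedPressure [MetricSpace X] (f : X → X) (φ ψ : X → ℝ) : EReal :=
  ⨆ (ε : ℝ) (_ : 0 < ε),
    Filter.limsup (fun T : ℝ => ((T⁻¹ * Real.log (Qspan f φ ψ T ε) : ℝ) : EReal)) atTop

/-- Largest sum over `(n,ε)`-separated sets of `X`. -/
noncomputable def sepSum [MetricSpace X] (f : X → X) (φ : X → ℝ) (n : ℕ) (ε : ℝ) : ℝ :=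
  sSup { r : ℝ | ∃ E : Finset X, IsSeparatedSet f n ε E ∧
    r = ∑ x ∈ E, Real.exp (birkhoff f φ n x) }

/-- The classical (Walters) topological pressure. -/
noncomputable def topPressure [MetricSpace X] (f : X → X) (φ : X → ℝ) : EReal :=
  ⨆ (ε : ℝ) (_ : 0 < ε),
    Filter.limsup (fun n : ℕ => (((n : ℝ)⁻¹ * Real.log (sepSum f φ n ε) : ℝ) : EReal)) atTop


open Real

section Birkhoff

variable (f : X → X)

lemma birkhoff_succ (ψ : X → ℝ) (n : ℕ) (x : X) :
    birkhoff f ψ (n + 1) x = birkhoff f ψ n x + ψ (f^[n] x) :=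
  Finset.sum_range_succ _ _

lemma birkhoff_sub_const_mul (φ ψ : X → ℝ) (β : ℝ) (n : ℕ) (x : X) :
    birkhoff f (fun y => φ y - β * ψ y) n x = birkhoff f φ n x - β * birkhoff f ψ n x := by
  simp only [birkhoff, Finset.mul_sum, Finset.sum_sub_distrib]

lemma mul_le_birkhoff {ψ : X → ℝ} {c : ℝ} (hc : ∀ x, c ≤ ψ x) (n : ℕ) (x : X) :
    n * c ≤ birkhoff f ψ n x := by
  simpa [birkhoff] using Finset.card_nsmul_le_sum (Finset.range n) _ c fun i _ => hc (f^[i] x)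

lemma birkhoff_le_mul {ψ : X → ℝ} {C : ℝ} (hC : ∀ x, ψ x ≤ C) (n : ℕ) (x : X) :
    birkhoff f ψ n x ≤ n * C := by
  simpa [birkhoff] using Finset.sum_le_card_nsmul (Finset.range n) _ C fun i _ => hC (f^[i] x)

lemma mem_Xset_natCeil {ψ : X → ℝ} {c : ℝ} (hc0 : 0 < c) (hc : ∀ x, c ≤ ψ x) (n : ℕ) (x : X) :
    x ∈ Xset f ψ (⌈birkhoff f ψ n x / c⌉₊ * c) n := by
  have hS : 0 ≤ birkhoff f ψ n x / c :=
    div_nonneg ((by positivity : (0 : ℝ) ≤ n * c).trans (mul_le_birkhoff f hc n x)) hc0.le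
  refine ⟨(div_le_iff₀ hc0).mp (Nat.le_ceil _), ?_⟩
  calc (⌈birkhoff f ψ n x / c⌉₊ : ℝ) * c < (birkhoff f ψ n x / c + 1) * c := by
        gcongr; exact Nat.ceil_lt_add_one hS
    _ = birkhoff f ψ n x + c := by field_simp
    _ ≤ birkhoff f ψ (n + 1) x := by rw [birkhoff_succ]; linarith [hc (f^[n] x)]

lemma birkhoff_sub_const_mul_le_of_mem_Xset {φ ψ : X → ℝ} {C : ℝ} (hC : ∀ x, ψ x ≤ C) (β : ℝ)
    {T : ℝ} {n : ℕ} {x : X} (hx : x ∈ Xset f ψ T n) :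
    birkhoff f (fun y => φ y - β * ψ y) n x ≤ birkhoff f φ n x - β * T + |β| * C := by
  obtain ⟨hle, hlt⟩ := hx
  rw [birkhoff_succ] at hlt
  have hgap : β * (T - birkhoff f ψ n x) ≤ |β| * C :=
    calc β * (T - birkhoff f ψ n x) ≤ |β| * (T - birkhoff f ψ n x) :=
          mul_le_mul_of_nonneg_right (le_abs_self β) (by linarith)
      _ ≤ |β| * C := by gcongr; linarith [hC (f^[n] x)]
  rw [birkhoff_sub_const_mul]
  linarith

lemma STset_subset_Iic {ψ : X → ℝ} {c : ℝ} (hc0 : 0 < c) (hc : ∀ x, c ≤ ψ x) (T : ℝ) :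
    STset f ψ T ⊆ Set.Iic ⌊T / c⌋₊ := by
  rintro n ⟨x, hx, -⟩
  exact Nat.le_floor ((le_div_iff₀ hc0).mpr ((mul_le_birkhoff f hc n x).trans hx))

lemma le_tsum_indicator_STset {ψ : X → ℝ} {c : ℝ} (hc0 : 0 < c) (hc : ∀ x, c ≤ ψ x) {T : ℝ}
    {g : ℕ → ℝ} (hg : ∀ n, 0 ≤ g n) {n : ℕ} (hn : n ∈ STset f ψ T) :
    g n ≤ ∑' m, (STset f ψ T).indicator g m := by
  have hfin : (STset f ψ T).Finite := (Set.finite_Iic _).subset (STset_subset_Iic f hc0 hc T)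
  have hsum : Summable ((STset f ψ T).indicator g) :=
    summable_of_hasFiniteSupport (hfin.subset Set.support_indicator_subset)
  simpa [Set.indicator_of_mem hn] using
    hsum.le_tsum n fun m _ => Set.indicator_nonneg (fun k _ => hg k) m

end Birkhoff

section DynDist

variable [MetricSpace X] (f : X → X)

lemma dynDist_nonneg (n : ℕ) (x y : X) : 0 ≤ dynDist f n x y :=
  Real.iSup_nonneg fun _ => dist_nonneg

lemma dist_iterate_le_dynDist {n i : ℕ} (hi : i < n) (x y : X) :
    dist (f^[i] x) (f^[i] y) ≤ dynDist f n x y :=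
  le_ciSup (f := fun j : Fin n => dist (f^[(j : ℕ)] x) (f^[(j : ℕ)] y))
    (Set.finite_range _).bddAbove ⟨i, hi⟩

lemma dynDist_le {n : ℕ} {x y : X} {a : ℝ} (ha : 0 ≤ a)
    (h : ∀ i < n, dist (f^[i] x) (f^[i] y) ≤ a) : dynDist f n x y ≤ a :=
  Real.iSup_le (fun i => h i i.2) ha

lemma dynDist_comm (n : ℕ) (x y : X) : dynDist f n x y = dynDist f n y x := by
  simp only [dynDist, dist_comm]

lemma dynDist_triangle (n : ℕ) (x y z : X) :
    dynDist f n x z ≤ dynDist f n x y + dynDist f n y z :=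
  dynDist_le f (add_nonneg (dynDist_nonneg f n x y) (dynDist_nonneg f n y z)) fun _ hi =>
    (dist_triangle _ _ _).trans
      (add_le_add (dist_iterate_le_dynDist f hi x y) (dist_iterate_le_dynDist f hi y z))

lemma birkhoff_le_add_of_dynDist_le {φ : X → ℝ} {r δ : ℝ}
    (hφ : ∀ a b : X, dist a b ≤ r → φ a ≤ φ b + δ) {n : ℕ} {x y : X}
    (h : dynDist f n x y ≤ r) : birkhoff f φ n x ≤ birkhoff f φ n y + n * δ := by
  calc birkhoff f φ n x ≤ ∑ i ∈ Finset.range n, (φ (f^[i] y) + δ) :=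
        Finset.sum_le_sum fun i hi =>
          hφ _ _ ((dist_iterate_le_dynDist f (Finset.mem_range.mp hi) x y).trans h)
    _ = birkhoff f φ n y + n * δ := by simp [birkhoff, Finset.sum_add_distrib]

lemma IsSpanningSet.mono {n : ℕ} {ε : ℝ} {Z Z' : Set X} {F : Finset X}
    (h : IsSpanningSet f n ε Z' F) (hZ : Z ⊆ Z') : IsSpanningSet f n ε Z F :=
  fun y hy => h y (hZ hy)

lemma exists_isSpanningSet_univ [CompactSpace X] (hf : Continuous f) (n : ℕ) {ε : ℝ}
    (hε : 0 < ε) : ∃ F : Finset X, IsSpanningSet f n ε univ F := by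
  let U : X → Set X := fun x => ⋂ i : Fin n, f^[i] ⁻¹' Metric.ball (f^[i] x) ε
  have hU : ∀ x ∈ univ, U x ∈ 𝓝 x := fun x _ => Filter.iInter_mem.mpr fun i =>
    (hf.iterate i).continuousAt.preimage_mem_nhds (Metric.ball_mem_nhds _ hε)
  obtain ⟨F, -, hcover⟩ := isCompact_univ.elim_nhds_subcover U hU
  refine ⟨F, fun y _ => ?_⟩
  obtain ⟨x, hx, hy⟩ := mem_iUnion₂.mp (hcover (mem_univ y))
  refine ⟨x, hx, dynDist_le f hε.le fun i hi => ?_⟩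
  rw [dist_comm]
  exact (Metric.mem_ball.mp (mem_iInter.mp hy ⟨i, hi⟩)).le

lemma IsSeparatedSet.exists_injOn_of_isSpanningSet {n : ℕ} {ε r : ℝ} {E F : Finset X}
    {Z : Set X} (hE : IsSeparatedSet f n ε E) (hEZ : (E : Set X) ⊆ Z)
    (hF : IsSpanningSet f n r Z F) (hr : 2 * r ≤ ε) :
    ∃ j : X → X, Set.MapsTo j E F ∧ Set.InjOn j E ∧ ∀ x ∈ E, dynDist f n (j x) x ≤ r := by
  choose! j hjF hj using fun x (hx : x ∈ E) => hF x (hEZ hx)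
  refine ⟨j, hjF, fun x hx x' hx' heq => ?_, hj⟩
  by_contra hne
  refine (hE x hx x' hx' hne).not_ge ?_
  calc dynDist f n x x' ≤ dynDist f n x (j x) + dynDist f n (j x) x' := dynDist_triangle f n _ _ _
    _ = dynDist f n (j x) x + dynDist f n (j x') x' := by rw [dynDist_comm f n x, heq]
    _ ≤ ε := by linarith [hj x hx, hj x' hx']

lemma IsSeparatedSet.sum_exp_birkhoff_le {φ : X → ℝ} {n : ℕ} {ε r δ : ℝ} {E F : Finset X}
    {Z : Set X} (hE : IsSeparatedSet f n ε E) (hEZ : (E : Set X) ⊆ Z)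
    (hF : IsSpanningSet f n r Z F) (hr : 2 * r ≤ ε)
    (hφ : ∀ a b : X, dist a b ≤ r → φ a ≤ φ b + δ) :
    ∑ x ∈ E, exp (birkhoff f φ n x) ≤ exp (n * δ) * ∑ y ∈ F, exp (birkhoff f φ n y) := by
  classical
  obtain ⟨j, hjF, hinj, hj⟩ := hE.exists_injOn_of_isSpanningSet f hEZ hF hr
  calc ∑ x ∈ E, exp (birkhoff f φ n x) ≤ ∑ x ∈ E, exp (n * δ) * exp (birkhoff f φ n (j x)) := by
        gcongr with x hx
        rw [← exp_add, add_comm]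
        gcongr
        exact birkhoff_le_add_of_dynDist_le f hφ ((dynDist_comm f n _ _).trans_le (hj x hx))
    _ = exp (n * δ) * ∑ y ∈ E.image j, exp (birkhoff f φ n y) := by
        rw [Finset.sum_image hinj, Finset.mul_sum]
    _ ≤ exp (n * δ) * ∑ y ∈ F, exp (birkhoff f φ n y) := by
        gcongr ?_ * ?_
        exact Finset.sum_le_sum_of_subset_of_nonneg (Finset.image_subset_iff.mpr hjF)
          fun _ _ _ => (exp_pos _).le

end DynDist

lemma IsSeparatedSet.subset [MetricSpace X] {f : X → X} {n : ℕ} {ε : ℝ} {E E' : Finset X}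
    (h : IsSeparatedSet f n ε E) (hE : E' ⊆ E) : IsSeparatedSet f n ε E' :=
  fun x hx y hy hxy => h x (hE hx) y (hE hy) hxy

section Pressure

variable [MetricSpace X] [CompactSpace X] (f : X → X) (hf : Continuous f) {φ ψ : X → ℝ}
  {c C : ℝ} (hc0 : 0 < c) (hc : ∀ x, c ≤ ψ x) (hC : ∀ x, ψ x ≤ C)
  {ε r δ : ℝ} (hr : 0 < r) (hrε : 2 * r ≤ ε) (hφ : ∀ a b : X, dist a b ≤ r → φ a ≤ φ b + δ)
include hf hc0 hc hr hrε hφ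

lemma sum_exp_birkhoff_le_mul_Qspan {n : ℕ} {T : ℝ} {E : Finset X}
    (hE : IsSeparatedSet f n ε E) (hEX : (E : Set X) ⊆ Xset f ψ T n) (hn : n ∈ STset f ψ T) :
    ∑ x ∈ E, exp (birkhoff f φ n x) ≤ exp (n * δ) * Qspan f φ ψ T r := by
  choose F₀ hF₀ using fun m => exists_isSpanningSet_univ f hf m hr
  rw [← div_le_iff₀' (exp_pos _)]
  refine le_csInf ⟨_, F₀, fun m _ => (hF₀ m).mono f (subset_univ _), rfl⟩ ?_
  rintro _ ⟨F, hF, rfl⟩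
  rw [div_le_iff₀' (exp_pos _)]
  calc ∑ x ∈ E, exp (birkhoff f φ n x) ≤ exp (n * δ) * ∑ y ∈ F n, exp (birkhoff f φ n y) :=
        hE.sum_exp_birkhoff_le f hEX (hF n hn) hrε hφ
    _ ≤ exp (n * δ) * ∑' m, (STset f ψ T).indicator
          (fun m => ∑ y ∈ F m, exp (birkhoff f φ m y)) m := by
        gcongr
        exact le_tsum_indicator_STset f hc0 hc
          (fun m => Finset.sum_nonneg fun _ _ => (exp_pos _).le) hn

include hC

lemma sum_exp_birkhoff_sub_const_mul_le {β T : ℝ} (hQ : Qspan f φ ψ T r ≤ exp (β * T))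
    {n : ℕ} {E : Finset X} (hE : IsSeparatedSet f n ε E) (hEX : (E : Set X) ⊆ Xset f ψ T n)
    (hn : n ∈ STset f ψ T) :
    ∑ x ∈ E, exp (birkhoff f (fun y => φ y - β * ψ y) n x) ≤ exp (|β| * C + n * δ) := by
  calc ∑ x ∈ E, exp (birkhoff f (fun y => φ y - β * ψ y) n x)
        ≤ ∑ x ∈ E, exp (|β| * C - β * T) * exp (birkhoff f φ n x) := by
        gcongr with x hx
        rw [← exp_add]
        gcongr
        linarith [birkhoff_sub_const_mul_le_of_mem_Xset f (φ := φ) hC β (hEX hx)]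
    _ = exp (|β| * C - β * T) * ∑ x ∈ E, exp (birkhoff f φ n x) := by rw [Finset.mul_sum]
    _ ≤ exp (|β| * C - β * T) * (exp (n * δ) * exp (β * T)) := by
        gcongr
        exact (sum_exp_birkhoff_le_mul_Qspan f hf hc0 hc hr hrε hφ hE hEX hn).trans (by gcongr)
    _ = exp (|β| * C + n * δ) := by rw [← exp_add, ← exp_add]; ring_nf

lemma sepSum_sub_const_mul_le {β T₀ : ℝ} (hQ : ∀ T ≥ T₀, Qspan f φ ψ T r ≤ exp (β * T))
    {n : ℕ} (hn : T₀ ≤ n * c) :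
    sepSum f (fun x => φ x - β * ψ x) n ε ≤ (⌈n * C / c⌉₊ + 1) * exp (|β| * C + n * δ) := by
  classical
  refine Real.sSup_le ?_ (by positivity)
  rintro _ ⟨E, hE, rfl⟩
  let k : X → ℕ := fun x => ⌈birkhoff f ψ n x / c⌉₊
  have hk : ∀ x ∈ E, k x ∈ Finset.range (⌈n * C / c⌉₊ + 1) := fun x _ =>
    Finset.mem_range_succ_iff.mpr (Nat.ceil_mono (by gcongr; exact birkhoff_le_mul f hC n x))
  rw [← Finset.sum_fiberwise_of_maps_to hk]
  refine (Finset.sum_le_card_nsmul _ _ (exp (|β| * C + n * δ)) fun m _ => ?_).trans_eq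
    (by simp [nsmul_eq_mul])
  rcases (E.filter fun x => k x = m).eq_empty_or_nonempty with hempty | ⟨x, hx⟩
  · rw [hempty, Finset.sum_empty]
    positivity
  have hfiber : ((E.filter fun x => k x = m) : Set X) ⊆ Xset f ψ (m * c) n := by
    intro y hy
    obtain ⟨-, rfl⟩ := Finset.mem_filter.mp hy
    exact mem_Xset_natCeil f hc0 hc n y
  refine sum_exp_birkhoff_sub_const_mul_le f hf hc0 hc hC hr hrε hφ (hQ _ ?_)
    (hE.subset (Finset.filter_subset _ _)) hfiber ⟨x, hfiber hx⟩
  exact hn.trans ((mul_le_birkhoff f hc n x).trans (hfiber hx).1)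

end Pressure

lemma eventually_le_exp_of_limsup_lt {g : ℝ → ℝ} {β : ℝ}
    (h : limsup (fun T : ℝ => ((T⁻¹ * log (g T) : ℝ) : EReal)) atTop < β) :
    ∀ᶠ T in atTop, g T ≤ exp (β * T) := by
  filter_upwards [eventually_lt_of_limsup_lt h, eventually_gt_atTop 0] with T hT hT0
  rcases le_or_gt (g T) 0 with hg | hg
  · exact hg.trans (exp_pos _).le
  · have hlog : log (g T) < β * T := by
      rw [mul_comm]
      exact (inv_mul_lt_iff₀ hT0).mp (EReal.coe_lt_coe_iff.mp hT)
    exact ((log_lt_iff_lt_exp hg).mp hlog).le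

lemma eventually_linear_le_exp (a b : ℝ) {γ : ℝ} (hγ : 0 < γ) :
    ∀ᶠ x in atTop, a * x + b ≤ exp (γ * x) := by
  have h : (fun x : ℝ => a * x + b) =o[atTop] fun x => exp (γ * x) := by
    simpa using ((isLittleO_pow_exp_pos_mul_atTop 1 hγ).const_mul_left a).add
      ((isLittleO_pow_exp_pos_mul_atTop 0 hγ).const_mul_left b)
  filter_upwards [h.bound one_pos] with x hx
  simpa [abs_exp] using (le_abs_self _).trans hx

lemma limsup_inv_mul_log_le_zero {u : ℕ → ℝ} (hu : ∀ n, 0 ≤ u n) (a b : ℝ)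
    (h : ∀ δ > 0, ∀ᶠ n : ℕ in atTop, u n ≤ (a * n + b) * exp (δ * n)) :
    limsup (fun n : ℕ => (((n : ℝ)⁻¹ * log (u n) : ℝ) : EReal)) atTop ≤ 0 := by
  refine EReal.le_of_forall_lt_iff_le.mp fun z hz => ?_
  have hz0 : 0 < z := EReal.coe_pos.mp hz
  have hz2 : 0 < z / 2 := half_pos hz0
  refine limsup_le_of_le (by isBoundedDefault) ?_
  filter_upwards [h _ hz2,
    tendsto_natCast_atTop_atTop.eventually (eventually_linear_le_exp a b hz2),
    eventually_gt_atTop 0] with n hu_le hlin hn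
  have hn' : (0 : ℝ) < n := Nat.cast_pos.mpr hn
  have hle : u n ≤ exp (z * n) :=
    calc u n ≤ exp (z / 2 * n) * exp (z / 2 * n) :=
          hu_le.trans (mul_le_mul_of_nonneg_right hlin (exp_pos _).le)
      _ = exp (z * n) := by rw [← exp_add]; ring_nf
  have hlog : log (u n) ≤ n * z := by
    rcases (hu n).eq_or_lt with h0 | h0
    · rw [← h0, log_zero]
      positivity
    · linarith [(log_le_iff_le_exp h0).mpr hle]
  exact EReal.coe_le_coe_iff.mpr ((inv_mul_le_iff₀ hn').mpr hlog)

theorem topPressure_sub_const_mul_nonpos_of_inducedPressure_lt [MetricSpace X] [CompactSpace X]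
    [Nonempty X] {f : X → X} (hf : Continuous f) {φ ψ : X → ℝ} (hφ : Continuous φ)
    (hψ : Continuous ψ) (hpos : ∀ x, 0 < ψ x) {β : ℝ} (hβ : inducedPressure f φ ψ < β) :
    topPressure f (fun x => φ x - β * ψ x) ≤ 0 := by
  obtain ⟨c, hc0, hc⟩ : ∃ c, 0 < c ∧ ∀ x, c ≤ ψ x := by
    obtain ⟨x₀, -, hx₀⟩ := isCompact_univ.exists_isMinOn univ_nonempty hψ.continuousOn
    exact ⟨ψ x₀, hpos x₀, fun x => hx₀ (mem_univ x)⟩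
  obtain ⟨C, hC⟩ : ∃ C, ∀ x, ψ x ≤ C := by
    obtain ⟨x₁, -, hx₁⟩ := isCompact_univ.exists_isMaxOn univ_nonempty hψ.continuousOn
    exact ⟨ψ x₁, fun x => hx₁ (mem_univ x)⟩
  have hC0 : 0 ≤ C := hc0.le.trans ((hc (Classical.arbitrary X)).trans (hC _))
  refine iSup₂_le fun ε hε => limsup_inv_mul_log_le_zero
    (fun n => Real.sSup_nonneg ?_) (exp (|β| * C) * (C / c)) (2 * exp (|β| * C)) fun δ hδ => ?_
  · rintro _ ⟨E, -, rfl⟩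
    exact Finset.sum_nonneg fun _ _ => (exp_pos _).le
  obtain ⟨ε₀, hε₀, hmod⟩ := Metric.uniformContinuous_iff.mp
    (CompactSpace.uniformContinuous_of_continuous hφ) δ hδ
  set r := min (ε / 2) (ε₀ / 2)
  have hr : 0 < r := lt_min (half_pos hε) (half_pos hε₀)
  have hφr : ∀ a b : X, dist a b ≤ r → φ a ≤ φ b + δ := fun a b hab => by
    have := hmod (hab.trans_lt ((min_le_right _ _).trans_lt (half_lt_self hε₀)))
    rw [Real.dist_eq] at this
    linarith [le_abs_self (φ a - φ b)]
  obtain ⟨T₀, hT₀⟩ := eventually_atTop.mp <| eventually_le_exp_of_limsup_lt <|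
    (le_iSup₂ (f := fun (e : ℝ) (_ : 0 < e) =>
      limsup (fun T : ℝ => ((T⁻¹ * log (Qspan f φ ψ T e) : ℝ) : EReal)) atTop) r hr).trans_lt hβ
  filter_upwards [tendsto_natCast_atTop_atTop.eventually_ge_atTop (T₀ / c)] with n hn
  calc sepSum f (fun x => φ x - β * ψ x) n ε
      ≤ (⌈n * C / c⌉₊ + 1) * exp (|β| * C + n * δ) :=
        sepSum_sub_const_mul_le f hf hc0 hc hC hr (by linarith [min_le_left (ε / 2) (ε₀ / 2)])
          hφr hT₀ ((div_le_iff₀ hc0).mp hn)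
    _ ≤ (n * C / c + 2) * exp (|β| * C + n * δ) := by
        refine mul_le_mul_of_nonneg_right ?_ (exp_pos _).le
        linarith [Nat.ceil_lt_add_one (by positivity : 0 ≤ n * C / c)]
    _ = (exp (|β| * C) * (C / c) * n + 2 * exp (|β| * C)) * exp (δ * n) := by
        rw [exp_add, mul_comm δ]
        ring

/-- `P_ψ(φ) ≥ inf{β : P(φ - βψ) ≤ 0}`. -/
theorem stmt7 [MetricSpace X] [CompactSpace X] [Nonempty X]
    (f : X → X) (φ ψ : X → ℝ) (hf : Continuous f) (hφ : Continuous φ) (hψ : Continuous ψ)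
    (hpos : ∀ x, 0 < ψ x) :
    sInf { b : EReal | ∃ β : ℝ, b = (β : EReal) ∧
        topPressure f (fun x => φ x - β * ψ x) ≤ 0 } ≤ inducedPressure f φ ψ :=
  EReal.le_of_forall_lt_iff_le.mp fun β hβ =>
    sInf_le ⟨β, rfl, topPressure_sub_const_mul_nonpos_of_inducedPressure_lt hf hφ hψ hpos hβ⟩
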